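/- arXiv:1908.08441 — 4 statements merged into one kernel-verified Lean document; each statement's English description precedes it below -/
import Mathlib

section
/- Suppose λ_k^*: ℕ → ℝ is a positive sequence with (λ_k^*)^{d/2} subadditive, and suppose there is a finite set J ⊂ ℕ such that for every k ∉ J there exist nonnegative integers (n_j)_{j∈J} with Σ_{j∈J} n_j · j = k and (λ_k^*)^{d/2} = Σ_{j∈J} n_j (λ_j^*)^{d/2}. Then inf_k (λ_k^*)^{d/2}/k = min_{j∈J} (λ_j^*)^{d/2}/j; in particular the infimum is attained. -/
/-- If `λ*` is a positive sequence with `(λ*_k)^{d/2}` subadditive, and there is a finite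
set `J ⊂ ℕ` (not containing `0`) such that for every `k ≥ 1` with `k ∉ J` there is a
decomposition `k = Σ_{j ∈ J} n_j · j` with `(λ*_k)^{d/2} = Σ_{j ∈ J} n_j (λ*_j)^{d/2}`,
then `inf_{k ≥ 1} (λ*_k)^{d/2}/k = min_{j ∈ J} (λ*_j)^{d/2}/j`; in particular the infimum
is attained. -/
theorem inf_eq_min_over_J
    (d : ℕ) (hd : 2 ≤ d) (lam : ℕ → ℝ)
    (hpos : ∀ k, 1 ≤ k → 0 < lam k)
    (hsub : ∀ j l, 1 ≤ j → 1 ≤ l →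
      lam (j + l) ^ ((d : ℝ) / 2) ≤ lam j ^ ((d : ℝ) / 2) + lam l ^ ((d : ℝ) / 2))
    (J : Finset ℕ) (hJne : J.Nonempty) (hJ0 : 0 ∉ J)
    (hdecomp : ∀ k, 1 ≤ k → k ∉ J → ∃ n : ℕ → ℕ,
      (∑ j ∈ J, n j * j) = k ∧
      lam k ^ ((d : ℝ) / 2) = ∑ j ∈ J, (n j : ℝ) * lam j ^ ((d : ℝ) / 2)) :
    IsGLB {x : ℝ | ∃ k : ℕ, 1 ≤ k ∧ x = lam k ^ ((d : ℝ) / 2) / k}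
      (J.inf' hJne fun j => lam j ^ ((d : ℝ) / 2) / j) := by
  set m := J.inf' hJne fun j => lam j ^ ((d : ℝ) / 2) / j with hm
  -- each j ∈ J satisfies m * j ≤ lam j ^ (d/2)
  have hJpos : ∀ j ∈ J, (0 : ℝ) < j := by
    intro j hj
    have : j ≠ 0 := fun h => hJ0 (h ▸ hj)
    exact_mod_cast Nat.pos_of_ne_zero this
  have hkey : ∀ j ∈ J, m * j ≤ lam j ^ ((d : ℝ) / 2) := by
    intro j hj
    have h1 : m ≤ lam j ^ ((d : ℝ) / 2) / j := Finset.inf'_le _ hj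
    exact (le_div_iff₀ (hJpos j hj)).mp h1
  constructor
  · -- lower bound
    rintro x ⟨k, hk, rfl⟩
    have hkpos : (0 : ℝ) < k := by exact_mod_cast hk
    rw [le_div_iff₀ hkpos]
    by_cases hkJ : k ∈ J
    · exact hkey k hkJ
    · obtain ⟨n, hsum, heq⟩ := hdecomp k hk hkJ
      rw [heq]
      have hkcast : (k : ℝ) = ∑ j ∈ J, (n j : ℝ) * j := by
        rw [← hsum]; push_cast; ring
      calc m * k = ∑ j ∈ J, (n j : ℝ) * (m * j) := by
            rw [hkcast, Finset.mul_sum]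
            exact Finset.sum_congr rfl fun j _ => by ring
        _ ≤ ∑ j ∈ J, (n j : ℝ) * lam j ^ ((d : ℝ) / 2) :=
            Finset.sum_le_sum fun j hj =>
              mul_le_mul_of_nonneg_left (hkey j hj) (Nat.cast_nonneg _)
  · -- m is in the set, so it is the greatest lower bound
    intro b hb
    obtain ⟨j0, hj0, hj0eq⟩ := Finset.exists_mem_eq_inf' hJne
      (fun j => lam j ^ ((d : ℝ) / 2) / j)
    have hj1 : 1 ≤ j0 := Nat.one_le_iff_ne_zero.mpr fun h => hJ0 (h ▸ hj0)
    exact hb ⟨j0, hj1, hj0eq⟩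
end

section
/- Suppose a positive sequence x_k satisfies x_k^{d/2}/k → (2π)^d/ω_d as k → ∞ (Weyl's law for the generator Ω), and a sequence L_k ≤ x_k satisfies: L_k^{d/2}/k converges to its infimum over k, and there is an infinite set of indices k along which L_k = x_k. Then inf_k L_k^{d/2}/k = (2π)^d/ω_d; consequently, for every k, L_k^{d/2} ≥ (2π)^d k / ω_d. -/
open Filter Topology MeasureTheory

/-- The volume of the unit ball in `ℝ^d`. -/
noncomputable def omegaBall (d : ℕ) : ℝ :=
  (volume (Metric.ball (0 : EuclideanSpace ℝ (Fin d)) 1)).toReal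

theorem iInf_pnat_le_of_tendsto {α : Type*} [ConditionallyCompleteLinearOrder α]
    [TopologicalSpace α] [OrderTopology α] {u : ℕ → α} {a : α}
    (hu : Tendsto u atTop (𝓝 a)) (k : ℕ+) : ⨅ n : ℕ+, u n ≤ u k :=
  ciInf_le (hu.bddBelow_range.mono (Set.range_comp_subset_range _ _)) k

theorem polya_of_generator_minimiser_infinitely_often_general
    (d : ℕ) (x L : ℕ → ℝ)
    (hWeyl : Tendsto (fun k : ℕ => x k ^ ((d : ℝ) / 2) / k) atTop
      (𝓝 ((2 * Real.pi) ^ d / omegaBall d)))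
    (hFekete : Tendsto (fun k : ℕ => L k ^ ((d : ℝ) / 2) / k) atTop
      (𝓝 (⨅ k : ℕ+, L k ^ ((d : ℝ) / 2) / ((k : ℕ) : ℝ))))
    (hinf : {k : ℕ | L k = x k}.Infinite) :
    (⨅ k : ℕ+, L k ^ ((d : ℝ) / 2) / ((k : ℕ) : ℝ)) = (2 * Real.pi) ^ d / omegaBall d ∧
    ∀ k, 1 ≤ k → (2 * Real.pi) ^ d / omegaBall d * k ≤ L k ^ ((d : ℝ) / 2) := by
  have hlim : (⨅ k : ℕ+, L k ^ ((d : ℝ) / 2) / ((k : ℕ) : ℝ)) = (2 * Real.pi) ^ d / omegaBall d :=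
    tendsto_nhds_unique_of_frequently_eq hFekete hWeyl
      ((Nat.frequently_atTop_iff_infinite.2 hinf).mono fun k hk => by rw [hk])
  refine ⟨hlim, fun k hk => ?_⟩
  have hle := iInf_pnat_le_of_tendsto hFekete ⟨k, hk⟩
  rw [hlim] at hle
  exact (le_div_iff₀ (by exact_mod_cast hk)).1 hle

/-- If `x k = λ_k(Ω)` satisfies Weyl's law `x_k^{d/2}/k → (2π)^d/ω_d`, and `L k ≤ x k`
is positive with `L_k^{d/2}/k` converging to its infimum, and `L k = x k` for infinitely
many `k`, then the infimum equals `(2π)^d/ω_d`; consequently `L_k^{d/2} ≥ (2π)^d k/ω_d`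
for every `k ≥ 1` (Pólya's conjecture within the family). -/
theorem polya_of_generator_minimiser_infinitely_often
    (d : ℕ) (hd : 2 ≤ d) (x L : ℕ → ℝ)
    (hLpos : ∀ k, 1 ≤ k → 0 < L k)
    (hWeyl : Tendsto (fun k : ℕ => x k ^ ((d : ℝ) / 2) / k) atTop
      (𝓝 ((2 * Real.pi) ^ d / omegaBall d)))
    (hle : ∀ k, L k ≤ x k)
    (hFekete : Tendsto (fun k : ℕ => L k ^ ((d : ℝ) / 2) / k) atTop
      (𝓝 (⨅ k : ℕ+, L k ^ ((d : ℝ) / 2) / ((k : ℕ) : ℝ))))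
    (hinf : {k : ℕ | L k = x k}.Infinite) :
    (⨅ k : ℕ+, L k ^ ((d : ℝ) / 2) / ((k : ℕ) : ℝ)) = (2 * Real.pi) ^ d / omegaBall d ∧
    ∀ k, 1 ≤ k → (2 * Real.pi) ^ d / omegaBall d * k ≤ L k ^ ((d : ℝ) / 2) :=
  polya_of_generator_minimiser_infinitely_often_general d x L hWeyl hFekete hinf
end

section
/- Packing densities compose: for bounded domains Ω, V, W of volume 1 in ℝ^d, the packing density satisfies ρ_{Ω,W} ≥ ρ_{Ω,V} · ρ_{V,W}. -/
/-!
Nesting packings: if `n` copies of `n^{-1/d}Ω` fit into `ρ^{-1/d}V` and `m` copies of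
`m^{-1/d}V` fit into `σ^{-1/d}W`, then rescaling the first packing by `m^{-1/d}ρ^{1/d}` and
placing one copy of it in each of the `m` copies of `V` packs `nm` copies of `(nm)^{-1/d}Ω`
into `(ρσ)^{-1/d}W`. Asymptotic packings of densities `ρ_P` and `σ_P` therefore compose to one
of density `ρ_P σ_P`, and the inequality between suprema follows.
-/

open MeasureTheory Pointwise

/-- A packing of the `n`-th propagation `Ω^{(n)} = ⊔_{l=1}^n n^{-1/d}Ω` of `Ω` into `V`
of density `ρ`, given by an isometric quasi-embedding: `n` isometries of `ℝ^d` sending the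
closures of the scaled copies `n^{-1/d}Ω` into `ρ^{-1/d}V`, with pairwise disjoint images
of the interiors (injectivity on the interior of the domain). -/
def IsPackingMap (d n : ℕ) (ρ : ℝ) (Ω V : Set (EuclideanSpace ℝ (Fin d)))
    (f : ℕ → EuclideanSpace ℝ (Fin d) → EuclideanSpace ℝ (Fin d)) : Prop :=
  (∀ l < n, Isometry (f l)) ∧
  (∀ l < n,
    f l '' closure (((n : ℝ) ^ (-(1 : ℝ) / d)) • Ω) ⊆ (ρ ^ (-(1 : ℝ) / d)) • V) ∧
  (∀ l < n, ∀ m < n, l ≠ m →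
    Disjoint (f l '' interior (((n : ℝ) ^ (-(1 : ℝ) / d)) • Ω))
      (f m '' interior (((n : ℝ) ^ (-(1 : ℝ) / d)) • Ω)))

/-- The set of asymptotic densities `ρ_P` of asymptotic packings of `Ω` into `V`:
triples of a strictly increasing sequence `n_i`, densities `ρ_i ∈ (0,1]` converging to
`ρ_P`, and packings of `Ω^{(n_i)}` into `V` of density `ρ_i`. -/
def AsympDensitySet (d : ℕ) (Ω V : Set (EuclideanSpace ℝ (Fin d))) : Set ℝ :=
  {ρP | ∃ (n : ℕ → ℕ) (ρ : ℕ → ℝ)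
      (f : ℕ → ℕ → EuclideanSpace ℝ (Fin d) → EuclideanSpace ℝ (Fin d)),
    StrictMono n ∧ (∀ i, 0 < ρ i ∧ ρ i ≤ 1) ∧
    Filter.Tendsto ρ Filter.atTop (nhds ρP) ∧
    ∀ i, IsPackingMap d (n i) (ρ i) Ω V (f i)}

/-- The packing density `ρ_{Ω,V}` of `Ω` into `V`. -/
noncomputable def packDensity (d : ℕ) (Ω V : Set (EuclideanSpace ℝ (Fin d))) : ℝ :=
  sSup (AsympDensitySet d Ω V)

section Packing

variable {E : Type*} [MetricSpace E]

def IsPacking (n : ℕ) (A B : Set E) (f : ℕ → E → E) : Prop :=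
  (∀ l < n, Isometry (f l)) ∧ (∀ l < n, f l '' closure A ⊆ B) ∧
  (∀ l < n, ∀ m < n, l ≠ m → Disjoint (f l '' interior A) (f m '' interior A))

theorem IsPacking.comp {n m : ℕ} {A B C : Set E} {f g : ℕ → E → E} (hB : IsOpen B)
    (hf : IsPacking n A B f) (hg : IsPacking m B C g) :
    IsPacking (n * m) A C (fun k => g (k / n) ∘ f (k % n)) := by
  obtain ⟨hf_iso, hf_sub, hf_disj⟩ := hf
  obtain ⟨hg_iso, hg_sub, hg_disj⟩ := hg
  have hdiv : ∀ {k}, k < n * m → k / n < m := Nat.div_lt_of_lt_mul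
  have hmod : ∀ {k}, k < n * m → k % n < n := fun hk =>
    Nat.mod_lt _ (Nat.pos_of_mul_pos_right (Nat.zero_lt_of_lt hk))
  have hfB : ∀ {k}, k < n * m → f (k % n) '' interior A ⊆ B := fun hk =>
    (Set.image_mono interior_subset_closure).trans (hf_sub _ (hmod hk))
  refine ⟨fun k hk => (hg_iso _ (hdiv hk)).comp (hf_iso _ (hmod hk)), fun k hk => ?_,
    fun k hk k' hk' hne => ?_⟩
  · rw [Set.image_comp]
    exact (Set.image_mono ((hf_sub _ (hmod hk)).trans subset_closure)).trans
      (hg_sub _ (hdiv hk))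
  · rw [Set.image_comp, Set.image_comp]
    by_cases hq : k / n = k' / n
    · have hr : k % n ≠ k' % n := fun hr =>
        hne (by rw [← Nat.div_add_mod k n, ← Nat.div_add_mod k' n, hq, hr])
      rw [← hq, Set.disjoint_image_iff (hg_iso _ (hdiv hk)).injective]
      exact hf_disj _ (hmod hk) _ (hmod hk') hr
    · rw [← hB.interior_eq] at hfB
      exact (hg_disj _ (hdiv hk) _ (hdiv hk') hq).mono
        (Set.image_mono (hfB hk)) (Set.image_mono (hfB hk'))

end Packing

section Rescaling

variable {𝕜 E : Type*} [NormedField 𝕜] [NormedAddCommGroup E] [NormedSpace 𝕜 E]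

def smulConj (c : 𝕜) (f : E → E) : E → E := fun x => c • f (c⁻¹ • x)

theorem Isometry.smulConj {c : 𝕜} (hc : c ≠ 0) {f : E → E} (hf : Isometry f) :
    Isometry (smulConj c f) :=
  Isometry.of_dist_eq fun x y => by
    rw [_root_.smulConj, _root_.smulConj, dist_smul₀, hf.dist_eq, dist_smul₀, ← mul_assoc,
      ← norm_mul, mul_inv_cancel₀ hc, norm_one, one_mul]

theorem image_smul_smulConj {c : 𝕜} (hc : c ≠ 0) (f : E → E) (S : Set E) :
    smulConj c f '' (c • S) = c • (f '' S) := by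
  simp only [smulConj, ← Set.image_smul, Set.image_image, inv_smul_smul₀ hc]

theorem IsPacking.smul {n : ℕ} {A B : Set E} {f : ℕ → E → E} (hf : IsPacking n A B f)
    {c : 𝕜} (hc : c ≠ 0) : IsPacking n (c • A) (c • B) (fun l => smulConj c (f l)) := by
  obtain ⟨hf_iso, hf_sub, hf_disj⟩ := hf
  refine ⟨fun l hl => (hf_iso l hl).smulConj hc, fun l hl => ?_, fun l hl m hm hlm => ?_⟩
  · rw [closure_smul₀' hc, image_smul_smulConj hc]
    exact Set.smul_set_mono (hf_sub l hl)
  · rw [interior_smul₀ hc, image_smul_smulConj hc, image_smul_smulConj hc, ← Set.image_smul,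
      ← Set.image_smul, Set.disjoint_image_iff (smul_right_injective E hc)]
    exact hf_disj l hl m hm hlm

end Rescaling

theorem isPackingMap_iff_isPacking {d n : ℕ} {ρ : ℝ} {Ω V : Set (EuclideanSpace ℝ (Fin d))}
    {f : ℕ → EuclideanSpace ℝ (Fin d) → EuclideanSpace ℝ (Fin d)} :
    IsPackingMap d n ρ Ω V f ↔
      IsPacking n (((n : ℝ) ^ (-(1 : ℝ) / d)) • Ω) ((ρ ^ (-(1 : ℝ) / d)) • V) f :=
  Iff.rfl

theorem IsPackingMap.exists_comp {d n m : ℕ} {ρ σ : ℝ} {Ω V W : Set (EuclideanSpace ℝ (Fin d))}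
    {f g : ℕ → EuclideanSpace ℝ (Fin d) → EuclideanSpace ℝ (Fin d)} (hρ : 0 < ρ) (hσ : 0 ≤ σ)
    (hV : IsOpen V) (hf : IsPackingMap d n ρ Ω V f) (hg : IsPackingMap d m σ V W g) :
    ∃ F, IsPackingMap d (n * m) (ρ * σ) Ω W F := by
  rcases Nat.eq_zero_or_pos m with rfl | hm
  · exact ⟨f, by simp [IsPackingMap]⟩
  rw [isPackingMap_iff_isPacking] at hf hg
  set e : ℝ := -(1 : ℝ) / d
  set b : ℝ := (m : ℝ) ^ e
  set r : ℝ := ρ ^ e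
  have hb : b ≠ 0 := (Real.rpow_pos_of_pos (Nat.cast_pos.mpr hm) e).ne'
  have hr : r ≠ 0 := (Real.rpow_pos_of_pos hρ e).ne'
  have hf' := hf.smul (div_ne_zero hb hr)
  rw [smul_smul (b / r) r V, div_mul_cancel₀ b hr] at hf'
  have hnest := (hf'.comp (hV.smul₀ hb) hg).smul hr
  have hΩ : r • (b / r) • (n : ℝ) ^ e • Ω = ((n * m : ℕ) : ℝ) ^ e • Ω := by
    rw [smul_smul, smul_smul, mul_div_cancel₀ b hr, Nat.cast_mul,
      Real.mul_rpow (Nat.cast_nonneg n) (Nat.cast_nonneg m), mul_comm]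
  rw [hΩ, smul_smul, ← Real.mul_rpow hρ.le hσ] at hnest
  exact ⟨_, isPackingMap_iff_isPacking.mpr hnest⟩

theorem mul_mem_asympDensitySet {d : ℕ} {Ω V W : Set (EuclideanSpace ℝ (Fin d))}
    (hV : IsOpen V) {x y : ℝ} (hx : x ∈ AsympDensitySet d Ω V) (hy : y ∈ AsympDensitySet d V W) :
    x * y ∈ AsympDensitySet d Ω W := by
  obtain ⟨n, ρ, f, hn, hρ, hρ_lim, hf⟩ := hx
  obtain ⟨m, σ, g, hm, hσ, hσ_lim, hg⟩ := hy
  choose F hF using fun i => (hf i).exists_comp (hρ i).1 (hσ i).1.le hV (hg i)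
  exact ⟨n * m, ρ * σ, F, hn.mul hm (fun _ => Nat.zero_le _) (fun _ => Nat.zero_le _),
    fun i => ⟨mul_pos (hρ i).1 (hσ i).1, mul_le_one₀ (hρ i).2 (hσ i).1.le (hσ i).2⟩,
    hρ_lim.mul hσ_lim, hF⟩

theorem asympDensitySet_subset_Icc {d : ℕ} {Ω V : Set (EuclideanSpace ℝ (Fin d))} :
    AsympDensitySet d Ω V ⊆ Set.Icc 0 1 := by
  rintro x ⟨n, ρ, f, -, hρ, hlim, -⟩
  exact ⟨ge_of_tendsto' hlim fun i => (hρ i).1.le, le_of_tendsto' hlim fun i => (hρ i).2⟩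

theorem Real.sSup_mul_sSup_le_of_mul_mem {A B C : Set ℝ} (hA : ∀ a ∈ A, 0 ≤ a)
    (hB : ∀ b ∈ B, 0 ≤ b) (hC : ∀ c ∈ C, 0 ≤ c) (hC_bdd : BddAbove C)
    (hmul : ∀ a ∈ A, ∀ b ∈ B, a * b ∈ C) : sSup A * sSup B ≤ sSup C := by
  have hC_sup : 0 ≤ sSup C := Real.sSup_nonneg hC
  have hB_sup : 0 ≤ sSup B := Real.sSup_nonneg hB
  have h_row : ∀ a ∈ A, a * sSup B ≤ sSup C := fun a ha => by
    rw [← smul_eq_mul, ← Real.sSup_smul_of_nonneg (hA a ha)]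
    exact Real.sSup_le (by rintro _ ⟨b, hb, rfl⟩; exact le_csSup hC_bdd (hmul a ha b hb)) hC_sup
  rw [mul_comm, ← smul_eq_mul, ← Real.sSup_smul_of_nonneg hB_sup]
  exact Real.sSup_le (by rintro _ ⟨a, ha, rfl⟩; exact (mul_comm _ a).trans_le (h_row a ha))
    hC_sup

theorem packDensity_composition_general
    (d : ℕ) (Ω V W : Set (EuclideanSpace ℝ (Fin d)))
    (hV : IsOpen V ∧ IsConnected V ∧ Bornology.IsBounded V ∧ volume V = 1) :
    packDensity d Ω V * packDensity d V W ≤ packDensity d Ω W :=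
  Real.sSup_mul_sSup_le_of_mul_mem (fun _ ha => (asympDensitySet_subset_Icc ha).1)
    (fun _ hb => (asympDensitySet_subset_Icc hb).1) (fun _ hc => (asympDensitySet_subset_Icc hc).1)
    ⟨1, fun _ hc => (asympDensitySet_subset_Icc hc).2⟩
    (fun _ ha _ hb => mul_mem_asympDensitySet hV.1 ha hb)

/-- Packing densities compose: for bounded domains `Ω, V, W` of volume `1` in `ℝ^d`,
`ρ_{Ω,W} ≥ ρ_{Ω,V} · ρ_{V,W}`. -/
theorem packDensity_composition
    (d : ℕ) (hd : 2 ≤ d) (Ω V W : Set (EuclideanSpace ℝ (Fin d)))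
    (hΩ : IsOpen Ω ∧ IsConnected Ω ∧ Bornology.IsBounded Ω ∧ volume Ω = 1)
    (hV : IsOpen V ∧ IsConnected V ∧ Bornology.IsBounded V ∧ volume V = 1)
    (hW : IsOpen W ∧ IsConnected W ∧ Bornology.IsBounded W ∧ volume W = 1) :
    packDensity d Ω V * packDensity d V W ≤ packDensity d Ω W :=
  packDensity_composition_general d Ω V W hV
end

section
/- Let (μ_k^*)_{k≥1} be positive with (μ_k^*)^{d/2} superadditive, let μ_k(Ω) ≤ μ_k^* for all k, and let Weyl's law hold for Ω: μ_k(Ω)^{d/2}/k → (2π)^d/ω_d. If there is an infinite set of k along which μ_k^* = μ_k(Ω), then sup_k (μ_k^*)^{d/2}/k = (2π)^d/ω_d, hence μ_k^*(𝒞)^{d/2} ≤ (2π)^d k/ω_d for all k (the Neumann Pólya conjecture within 𝒞). -/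
open Filter Topology MeasureTheory

/-- Neumann analogue of Proposition `Infinite`: let `(μ_k^*)` be positive with
`(μ_k^*)^{d/2}` superadditive, `μ_k(Ω) ≤ μ_k^*`, and suppose Weyl's law holds for `Ω`:
`μ_k(Ω)^{d/2}/k → (2π)^d/ω_d`. If `μ_k^* = μ_k(Ω)` for infinitely many `k`, then
`sup_{k ≥ 1} (μ_k^*)^{d/2}/k = (2π)^d/ω_d`, hence `(μ_k^*)^{d/2} ≤ (2π)^d k/ω_d`
for all `k ≥ 1`. -/
theorem neumann_polya_of_generator_maximiser_infinitely_often
    (d : ℕ) (hd : 2 ≤ d) (μstar μΩ : ℕ → ℝ)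
    (hpos : ∀ k, 1 ≤ k → 0 < μstar k) (hΩ0 : ∀ k, 0 ≤ μΩ k)
    (hsuper : ∀ j l, 1 ≤ j → 1 ≤ l →
      μstar j ^ ((d : ℝ) / 2) + μstar l ^ ((d : ℝ) / 2) ≤ μstar (j + l) ^ ((d : ℝ) / 2))
    (hle : ∀ k, μΩ k ≤ μstar k)
    (hWeyl : Tendsto (fun k : ℕ => μΩ k ^ ((d : ℝ) / 2) / k) atTop
      (𝓝 ((2 * Real.pi) ^ d / omegaBall d)))
    (hinf : {k : ℕ | μstar k = μΩ k}.Infinite) :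
    (⨆ k : ℕ+, μstar k ^ ((d : ℝ) / 2) / ((k : ℕ) : ℝ)) =
        (2 * Real.pi) ^ d / omegaBall d ∧
    ∀ k, 1 ≤ k → μstar k ^ ((d : ℝ) / 2) ≤ (2 * Real.pi) ^ d / omegaBall d * k := by
  set p : ℝ := (d : ℝ) / 2 with hpdef
  set L : ℝ := (2 * Real.pi) ^ d / omegaBall d with hLdef
  set S : Set ℕ := {k : ℕ | μstar k = μΩ k} with hSdef
  set a : ℕ → ℝ := fun k => μstar k ^ p with hadef
  have ha0 : ∀ k, 1 ≤ k → 0 ≤ a k := fun k hk => Real.rpow_nonneg (hpos k hk).le _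
  -- superadditivity iterated
  have hiter : ∀ j, 1 ≤ j → ∀ n : ℕ, 1 ≤ n → (n : ℝ) * a j ≤ a (n * j) := by
    intro j hj n hn
    induction n with
    | zero => omega
    | succ m ih =>
      rcases Nat.eq_zero_or_pos m with h0 | hm
      · subst h0; simp
      · have h1 := ih hm
        have h2 := hsuper (m * j) j (Nat.mul_pos hm hj) hj
        have he : (m + 1) * j = m * j + j := by ring
        rw [he]
        push_cast
        calc ((m : ℝ) + 1) * a j = (m : ℝ) * a j + a j := by ring
          _ ≤ a (m * j) + a j := by linarith
          _ ≤ a (m * j + j) := h2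
  -- the filter along the infinite set
  set F : Filter ℕ := atTop ⊓ 𝓟 S with hFdef
  have hF : F.NeBot := by
    rw [hFdef, Filter.inf_principal_neBot_iff]
    intro U hU
    obtain ⟨m, hm⟩ := mem_atTop_sets.mp hU
    obtain ⟨b, hb⟩ := (hinf.diff (Set.finite_Iic m)).nonempty
    exact ⟨b, hm b (le_of_lt (by simpa using hb.2)), hb.1⟩
  have hmem : ∀ᶠ k in F, k ∈ S :=
    Filter.eventually_inf_principal.mpr (Filter.Eventually.of_forall fun k hk => hk)
  have hgS : Tendsto (fun k : ℕ => a k / k) F (𝓝 L) := by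
    refine (hWeyl.mono_left inf_le_left).congr' ?_
    filter_upwards [hmem] with k hk
    have hk' : μstar k = μΩ k := hk
    simp only [hadef, hk']
  -- key estimate: a j / j ≤ L for all j ≥ 1
  have key : ∀ j, 1 ≤ j → a j / j ≤ L := by
    intro j hj
    have hj0 : (0 : ℝ) < j := by exact_mod_cast hj
    have hlim : Tendsto (fun k : ℕ => a j / j - a j / k) F (𝓝 (a j / j)) := by
      have h0 : Tendsto (fun k : ℕ => a j / k) atTop (𝓝 0) :=
        tendsto_const_div_atTop_nhds_zero_nat _
      have := ((tendsto_const_nhds : Tendsto (fun _ : ℕ => a j / (j : ℝ)) F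
        (𝓝 (a j / (j : ℝ)))).sub (h0.mono_left (inf_le_left : F ≤ atTop)))
      simpa using this
    have hineq : ∀ᶠ k in F, a j / j - a j / k ≤ a k / k := by
      filter_upwards [(eventually_ge_atTop j).filter_mono (inf_le_left : F ≤ atTop)]
        with k hjk
      have hk1 : 1 ≤ k := le_trans hj hjk
      have hk0 : (0 : ℝ) < k := by exact_mod_cast hk1
      set n := k / j with hndef
      have hn1 : 1 ≤ n := (Nat.one_le_div_iff (by omega)).mpr hjk
      have hnj : n * j ≤ k := Nat.div_mul_le_self k j
      have hkn : k < n * j + j := by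
        rw [hndef]
        exact Nat.lt_div_mul_add (by omega)
      -- a k ≥ n * a j
      have h1 : (n : ℝ) * a j ≤ a k := by
        rcases eq_or_lt_of_le hnj with heq | hlt
        · rw [← heq]; exact hiter j hj n hn1
        · have h2 := hsuper (n * j) (k - n * j) (Nat.mul_pos hn1 (by omega)) (by omega)
          rw [Nat.add_sub_cancel' hnj] at h2
          have h3 := hiter j hj n hn1
          have h4 := ha0 (k - n * j) (by omega)
          calc (n : ℝ) * a j ≤ a (n * j) := h3
            _ ≤ a (n * j) + a (k - n * j) := by linarith
            _ ≤ a k := h2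
      -- (k/j - 1) ≤ n
      have h5 : (k : ℝ) / j - 1 ≤ n := by
        rw [sub_le_iff_le_add, div_le_iff₀ hj0]
        have h7 : (k : ℝ) < (n : ℝ) * j + j := by exact_mod_cast hkn
        nlinarith
      have haj := ha0 j hj
      have e : a j / j - a j / k = ((k : ℝ) / j - 1) * a j / k := by
        field_simp
      rw [e]
      have h6 : ((k : ℝ) / j - 1) * a j ≤ (n : ℝ) * a j := by nlinarith
      calc ((k : ℝ) / j - 1) * a j / k ≤ (n : ℝ) * a j / k := by gcongr
        _ ≤ a k / k := by gcongr
    exact le_of_tendsto_of_tendsto hlim hgS hineq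
  -- the supremum
  have hbdd : BddAbove (Set.range fun k : ℕ+ => a k / ((k : ℕ) : ℝ)) := by
    refine ⟨L, ?_⟩
    rintro x ⟨k, rfl⟩
    exact key k k.one_le
  have hsup_le : (⨆ k : ℕ+, a k / ((k : ℕ) : ℝ)) ≤ L :=
    ciSup_le fun k => key k k.one_le
  have hle_sup : L ≤ ⨆ k : ℕ+, a k / ((k : ℕ) : ℝ) := by
    refine le_of_tendsto hgS ?_
    filter_upwards [(eventually_ge_atTop 1).filter_mono (inf_le_left : F ≤ atTop)]
      with k hk1
    exact le_ciSup hbdd (⟨k, hk1⟩ : ℕ+)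
  refine ⟨le_antisymm hsup_le hle_sup, fun k hk => ?_⟩
  have hk0 : (0 : ℝ) < k := by exact_mod_cast hk
  have := key k hk
  rw [div_le_iff₀ hk0] at this
  linarith
end
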